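/- Suppose α < β are real numbers, B ≠ 0, and there exists x̄ ∈ ℝⁿ with α < h(x̄) < β. Then strong duality holds: the infimum of f(x) over {x ∈ ℝⁿ : α ≤ h(x) ≤ β} equals the supremum over μ ∈ ℝ of inf_{x ∈ ℝⁿ} [f(x) + μ₋(h(x) − β) + μ₊(α − h(x))], where both optimal values are taken in the extended reals. -/

import Mathlib

open Matrix

/-- The quadratic function `x ↦ xᵀ M x + 2 mᵀ x + r`. -/
noncomputable def qfun {n : ℕ} (M : Matrix (Fin n) (Fin n) ℝ) (m : Fin n → ℝ) (r : ℝ)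
    (x : Fin n → ℝ) : ℝ :=
  x ⬝ᵥ M *ᵥ x + 2 * (m ⬝ᵥ x) + r

/-!
Weak duality is immediate. For the converse, let `p` be a real number below the primal value,
so that `f - p ≥ 0` on `{α ≤ h ≤ β}`. If `f - p ≥ 0` already holds on `{h < β}` (or on
`{h > α}`), the S-lemma for the single constraint `h - β < 0` (or `α - h < 0`) gives a multiplier.
The S-lemma itself comes from Dines' theorem (the joint range of two quadratic forms is convex),
applied to the homogenized functions, and from an elementary separation argument in the plane.
Otherwise there are points `x` with `f x < 0`, `h x < α` and `y` with `f y < 0`, `h y > β`. On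
the line `t ↦ x + t (y - x)`, `f` is nonnegative wherever `h` meets `[α, β]`. If
`(y - x)ᵀ B (y - x) > 0`, then `h` meets `[α, β]` also at some `t < 0`, and `f` would be
`≥ 0, < 0, ≥ 0, < 0` at four increasing points, which no quadratic is; by symmetry
`(y - x)ᵀ B (y - x) = 0`. Such pairs fill an open set, so the quadratic form of `B` vanishes.
-/

open Set Filter Topology

theorem exists_smul_of_mem_segment_of_det_eq_zero {p₀ p₁ p : ℝ × ℝ}
    (hdet : p₀.1 * p₁.2 - p₀.2 * p₁.1 = 0) (hp : p ∈ segment ℝ p₀ p₁) :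
    ∃ μ : ℝ, 0 ≤ μ ∧ (p = μ • p₀ ∨ p = μ • p₁) := by
  obtain ⟨u, v, hu, hv, -, rfl⟩ := hp
  obtain ⟨x₀, y₀⟩ := p₀
  obtain ⟨x₁, y₁⟩ := p₁
  simp only [Prod.smul_mk, Prod.mk_add_mk, Prod.mk.injEq, smul_eq_mul] at hdet ⊢
  set a := x₀ ^ 2 + y₀ ^ 2
  set b := x₀ * x₁ + y₀ * y₁
  have hx : a * x₁ = b * x₀ := by linear_combination -y₀ * hdet
  have hy : a * y₁ = b * y₀ := by linear_combination x₀ * hdet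
  rcases (add_nonneg (sq_nonneg x₀) (sq_nonneg y₀)).eq_or_lt with ha | ha
  · have hx₀ : x₀ = 0 := by nlinarith
    have hy₀ : y₀ = 0 := by nlinarith
    exact ⟨v, hv, .inr ⟨by simp [hx₀], by simp [hy₀]⟩⟩
  rcases le_or_gt 0 (u * a + v * b) with hc | hc
  · refine ⟨(u * a + v * b) / a, div_nonneg hc ha.le, .inl ⟨?_, ?_⟩⟩ <;>
      rw [div_mul_eq_mul_div, eq_div_iff ha.ne']
    · linear_combination v * hx
    · linear_combination v * hy
  · have hb : b < 0 := by nlinarith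
    refine ⟨(u * a + v * b) / b, div_nonneg_of_nonpos hc.le hb.le, .inr ⟨?_, ?_⟩⟩ <;>
      rw [div_mul_eq_mul_div, eq_div_iff hb.ne]
    · linear_combination -u * hx
    · linear_combination -u * hy

theorem mul_neg_add_mul_nonneg_of_convex {C : Set (ℝ × ℝ)} (hC : Convex ℝ C)
    (hneg : ∀ r ∈ C, r.2 < 0 → 0 ≤ r.1) {p q : ℝ × ℝ} (hp : p ∈ C) (hq : q ∈ C)
    (hp₂ : 0 ≤ p.2) (hq₂ : q.2 < 0) : 0 ≤ p.1 * -q.2 + q.1 * p.2 := by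
  -- `(1 - s) • p + s • q` crosses the axis `r.2 = 0` at `s₀` and lies below it for `s > s₀`
  set s₀ := p.2 / (p.2 - q.2)
  have hden : 0 < p.2 - q.2 := by linarith
  have hs₀ : s₀ < 1 := (div_lt_one hden).2 (by linarith)
  have hlim : Tendsto (fun s => (1 - s) * p.1 + s * q.1) (𝓝[>] s₀)
      (𝓝 ((1 - s₀) * p.1 + s₀ * q.1)) :=
    ((by fun_prop : Continuous fun s : ℝ => (1 - s) * p.1 + s * q.1).tendsto s₀).mono_left
      nhdsWithin_le_nhds
  have hev : ∀ᶠ s in 𝓝[>] s₀, 0 ≤ (1 - s) * p.1 + s * q.1 := by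
    filter_upwards [Ioo_mem_nhdsGT hs₀] with s ⟨hs₀s, hs1⟩
    have hs : 0 < s := (div_nonneg hp₂ hden.le).trans_lt hs₀s
    have hr := hC hp hq (sub_nonneg.2 hs1.le) hs.le (by ring)
    have : p.2 < s * (p.2 - q.2) := (div_lt_iff₀ hden).1 hs₀s
    simpa using hneg _ hr (by simp only [Prod.snd_add, Prod.smul_snd, smul_eq_mul]; linarith)
  have h₂ : s₀ * (p.2 - q.2) = p.2 := div_mul_cancel₀ _ hden.ne'
  calc 0 ≤ ((1 - s₀) * p.1 + s₀ * q.1) * (p.2 - q.2) :=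
        mul_nonneg (ge_of_tendsto hlim hev) hden.le
    _ = p.1 * -q.2 + q.1 * p.2 := by linear_combination (q.1 - p.1) * h₂

theorem exists_nonneg_add_mul_nonneg_of_convex {C : Set (ℝ × ℝ)} (hC : Convex ℝ C)
    (hslater : ∃ q ∈ C, q.2 < 0) (hneg : ∀ r ∈ C, r.2 < 0 → 0 ≤ r.1) :
    ∃ μ : ℝ, 0 ≤ μ ∧ ∀ p ∈ C, 0 ≤ p.1 + μ * p.2 := by
  -- `μ` is the infimum of the slopes `q.1 / -q.2` over the points `q ∈ C` below the axis
  set S := (fun q : ℝ × ℝ => q.1 / -q.2) '' {q ∈ C | q.2 < 0}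
  obtain ⟨q₀, hq₀, hq₀₂⟩ := hslater
  have hS : S.Nonempty := ⟨_, q₀, ⟨hq₀, hq₀₂⟩, rfl⟩
  have hS0 : ∀ x ∈ S, 0 ≤ x := by
    rintro _ ⟨q, ⟨hq, hq₂⟩, rfl⟩
    exact div_nonneg (hneg q hq hq₂) (by linarith)
  refine ⟨sInf S, le_csInf hS hS0, fun p hp => ?_⟩
  rcases lt_or_ge p.2 0 with hp₂ | hp₂
  · have := csInf_le ⟨0, hS0⟩ ⟨p, ⟨hp, hp₂⟩, rfl⟩
    rw [le_div_iff₀ (by linarith)] at this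
    linarith
  have hcross := fun q (hq : q ∈ C) hq₂ =>
    mul_neg_add_mul_nonneg_of_convex hC hneg hp hq hp₂ hq₂
  rcases hp₂.eq_or_lt with hp₂ | hp₂
  · have := hcross q₀ hq₀ hq₀₂
    rw [← hp₂] at this ⊢
    nlinarith
  · have : -p.1 / p.2 ≤ sInf S := by
      refine le_csInf hS ?_
      rintro _ ⟨q, ⟨hq, hq₂⟩, rfl⟩
      rw [div_le_div_iff₀ hp₂ (by linarith)]
      linarith [hcross q hq hq₂]
    rw [div_le_iff₀ hp₂] at this
    linarith

namespace QuadraticMap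

variable {V : Type*} [AddCommGroup V] [Module ℝ V]

theorem apply_smul_add_smul (Q : QuadraticForm ℝ V) (a b : ℝ) (x y : V) :
    Q (a • x + b • y) = a ^ 2 * Q x + b ^ 2 * Q y + a * b * polar Q x y := by
  rw [QuadraticMap.map_add Q, QuadraticMap.map_smul, QuadraticMap.map_smul, polar_smul_left,
    polar_smul_right, smul_eq_mul, smul_eq_mul, smul_eq_mul, smul_eq_mul]
  ring

def jointRange (Q₁ Q₂ : QuadraticForm ℝ V) : Set (ℝ × ℝ) :=
  range fun z => (Q₁ z, Q₂ z)

variable {Q₁ Q₂ : QuadraticForm ℝ V}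

theorem smul_mem_jointRange {p : ℝ × ℝ} (hp : p ∈ jointRange Q₁ Q₂) {μ : ℝ} (hμ : 0 ≤ μ) :
    μ • p ∈ jointRange Q₁ Q₂ := by
  obtain ⟨z, rfl⟩ := hp
  refine ⟨√μ • z, ?_⟩
  simp only [QuadraticMap.map_smul, Real.mul_self_sqrt hμ, Prod.smul_mk]

theorem segment_subset_jointRange_of_pos {z₀ z₁ : V} {τ₁ τ₂ : ℝ}
    (h₀ : 0 < τ₁ * Q₁ z₀ + τ₂ * Q₂ z₀) (h₁ : 0 < τ₁ * Q₁ z₁ + τ₂ * Q₂ z₁) :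
    segment ℝ (Q₁ z₀, Q₂ z₀) (Q₁ z₁, Q₂ z₁) ⊆ jointRange Q₁ Q₂ := by
  set R := τ₁ • Q₁ + τ₂ • Q₂
  have hR : ∀ z, R z = τ₁ * Q₁ z + τ₂ * Q₂ z := fun z => by simp [R]
  wlog hpolar : 0 ≤ polar R z₀ z₁ generalizing z₁
  · simpa only [QuadraticMap.map_neg] using
      this (z₁ := -z₁) (by simpa only [QuadraticMap.map_neg] using h₁)
        (by rw [polar_neg_right]; linarith)
  rintro p ⟨u, v, hu, hv, huv, hp⟩
  have hp₁ : p.1 = u * Q₁ z₀ + v * Q₁ z₁ := by simp [← hp]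
  have hp₂ : p.2 = u * Q₂ z₀ + v * Q₂ z₁ := by simp [← hp]
  let w : ℝ → V := fun t => (1 - t) • z₀ + t • z₁
  have hRw : ∀ t ∈ Icc (0 : ℝ) 1, 0 < R (w t) := by
    rintro t ⟨ht₀, ht₁⟩
    have hends : 0 < (1 - t) ^ 2 * R z₀ + t ^ 2 * R z₁ := by
      rw [hR, hR]
      rcases ht₁.lt_or_eq with ht | rfl
      · exact add_pos_of_pos_of_nonneg (mul_pos (pow_pos (sub_pos.2 ht) 2) h₀) (by positivity)
      · simpa using h₁
    rw [apply_smul_add_smul]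
    nlinarith [mul_nonneg (mul_nonneg (sub_nonneg.2 ht₁) ht₀) hpolar]
  let F : ℝ → ℝ := fun t => p.1 * Q₂ (w t) - p.2 * Q₁ (w t)
  have hF : Continuous F := by simp only [F, w, apply_smul_add_smul]; fun_prop
  have hF0 : 0 ∈ uIcc (F 0) (F 1) := by
    have e₀ : F 0 = -v * (Q₁ z₀ * Q₂ z₁ - Q₂ z₀ * Q₁ z₁) := by simp [F, w, hp₁, hp₂]; ring
    have e₁ : F 1 = u * (Q₁ z₀ * Q₂ z₁ - Q₂ z₀ * Q₁ z₁) := by simp [F, w, hp₁, hp₂]; ring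
    rw [e₀, e₁]
    rcases le_total 0 (Q₁ z₀ * Q₂ z₁ - Q₂ z₀ * Q₁ z₁) with hD | hD
    · exact mem_uIcc_of_le (by nlinarith) (by positivity)
    · exact mem_uIcc_of_ge (by nlinarith) (by nlinarith)
  obtain ⟨t, ht, hFt⟩ := intermediate_value_uIcc hF.continuousOn hF0
  rw [uIcc_of_le zero_le_one] at ht
  have hτp : 0 < τ₁ * p.1 + τ₂ * p.2 := by
    have := convex_Ioi (0 : ℝ) h₀ h₁ hu hv huv
    simp only [mem_Ioi, smul_eq_mul] at this
    rw [hp₁, hp₂]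
    linarith
  -- `Q (w t)` is parallel to `p` and on the same side of the line `τ = 0`
  convert smul_mem_jointRange ⟨w t, rfl⟩ (div_nonneg hτp.le (hRw t ht).le) using 1
  simp only [F] at hFt
  ext <;> simp only [Prod.smul_mk, smul_eq_mul] <;>
    rw [div_mul_eq_mul_div, eq_div_iff (hRw t ht).ne', hR]
  · linear_combination τ₂ * hFt
  · linear_combination -τ₁ * hFt

theorem convex_jointRange (Q₁ Q₂ : QuadraticForm ℝ V) : Convex ℝ (jointRange Q₁ Q₂) := by
  refine convex_iff_segment_subset.2 ?_
  rintro _ ⟨z₀, rfl⟩ _ ⟨z₁, rfl⟩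
  set D := Q₁ z₀ * Q₂ z₁ - Q₂ z₀ * Q₁ z₁ with hD_def
  by_cases hD : D = 0
  · intro p hp
    obtain ⟨μ, hμ, rfl | rfl⟩ := exists_smul_of_mem_segment_of_det_eq_zero hD hp
    exacts [smul_mem_jointRange ⟨z₀, rfl⟩ hμ, smul_mem_jointRange ⟨z₁, rfl⟩ hμ]
  -- this `τ` takes the value `1` at both endpoints
  refine segment_subset_jointRange_of_pos (τ₁ := (Q₂ z₁ - Q₂ z₀) / D)
    (τ₂ := (Q₁ z₀ - Q₁ z₁) / D) ?_ ?_ <;>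
  · rw [div_mul_eq_mul_div, div_mul_eq_mul_div, ← add_div,
      (div_eq_one_iff_eq hD).2 (by rw [hD_def]; ring)]
    exact one_pos

theorem exists_nonneg_add_mul_nonneg (Q₁ Q₂ : QuadraticForm ℝ V) (hslater : ∃ z, Q₂ z < 0)
    (h : ∀ z, Q₂ z < 0 → 0 ≤ Q₁ z) :
    ∃ μ : ℝ, 0 ≤ μ ∧ ∀ z, 0 ≤ Q₁ z + μ * Q₂ z := by
  obtain ⟨z, hz⟩ := hslater
  obtain ⟨μ, hμ, hall⟩ := exists_nonneg_add_mul_nonneg_of_convex (convex_jointRange Q₁ Q₂)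
    ⟨_, ⟨z, rfl⟩, hz⟩ (by rintro _ ⟨z, rfl⟩; exact h z)
  exact ⟨μ, hμ, fun z => hall _ ⟨z, rfl⟩⟩

end QuadraticMap

theorem tendsto_quadratic_atBot_atTop {a : ℝ} (ha : 0 < a) (b c : ℝ) :
    Tendsto (fun t => a * t ^ 2 + b * t + c) atBot atTop := by
  have : Tendsto (fun t => t * (a * t + b)) atBot atTop :=
    tendsto_id.atBot_mul_atBot₀
      (tendsto_atBot_add_const_right _ b (tendsto_id.const_mul_atBot ha))
  exact tendsto_atTop_add_const_right _ c (this.congr fun t => by ring)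

theorem eq_zero_of_eventually_quadratic_eq_zero {a b c : ℝ}
    (h : ∀ᶠ t in 𝓝 0, a * t ^ 2 + b * t + c = 0) : a = 0 := by
  obtain ⟨ε, hε, hball⟩ := Metric.eventually_nhds_iff.1 h
  have h₀ := hball (y := 0) (by simpa using hε)
  have hr := hball (y := ε / 2) (by
    rw [Real.dist_eq, sub_zero, abs_of_pos (half_pos hε)]; exact half_lt_self hε)
  have hl := hball (y := -(ε / 2)) (by
    rw [Real.dist_eq, sub_zero, abs_neg, abs_of_pos (half_pos hε)]; exact half_lt_self hε)
  have : a * (ε / 2) ^ 2 = 0 := by linear_combination (hr + hl - 2 * h₀) / 2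
  simpa [hε.ne'] using this

theorem quadratic_nonneg_of_dip {φ : ℝ → ℝ} {a b c : ℝ} (hφ : ∀ t, φ t = a * t ^ 2 + b * t + c)
    {t₁ t₂ t₃ t₄ : ℝ} (h₁₂ : t₁ < t₂) (h₂₃ : t₂ < t₃) (h₃₄ : t₃ ≤ t₄)
    (h₁ : 0 ≤ φ t₁) (h₂ : φ t₂ < 0) (h₃ : 0 ≤ φ t₃) : 0 ≤ φ t₄ := by
  rw [hφ] at h₁ h₂ h₃ ⊢
  have ha : 0 < a := by
    nlinarith [mul_pos (mul_pos (sub_pos.2 h₁₂) (sub_pos.2 h₂₃)) (sub_pos.2 (h₁₂.trans h₂₃))]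
  nlinarith [mul_nonneg (mul_nonneg (mul_nonneg ha.le (sub_pos.2 h₂₃).le) (sub_nonneg.2 h₃₄))
    (sub_pos.2 (h₂₃.trans_le h₃₄)).le]

theorem leading_coeff_nonpos_of_crossing {φ ψ : ℝ → ℝ} {qa la ca qb lb cb α β : ℝ}
    (hφ : ∀ t, φ t = qa * t ^ 2 + la * t + ca) (hψ : ∀ t, ψ t = qb * t ^ 2 + lb * t + cb)
    (hαβ : α ≤ β) (hfeas : ∀ t, α ≤ ψ t → ψ t ≤ β → 0 ≤ φ t)
    (hφ₀ : φ 0 < 0) (hψ₀ : ψ 0 < α) (hφ₁ : φ 1 < 0) (hψ₁ : β < ψ 1) : qb ≤ 0 := by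
  have hψc : Continuous ψ := by rw [funext hψ]; fun_prop
  obtain ⟨s, hs, hψs⟩ := intermediate_value_Icc zero_le_one hψc.continuousOn
    ⟨hψ₀.le, hαβ.trans hψ₁.le⟩
  have hφs := hfeas s hψs.ge (hψs ▸ hαβ)
  have hs₀ : 0 < s := hs.1.lt_of_ne (by rintro rfl; linarith)
  by_contra! hqb
  -- `ψ` is unbounded on the left, so it re-enters `[α, β]` at some `u < 0`
  have hψlim : Tendsto ψ atBot atTop :=
    (tendsto_quadratic_atBot_atTop hqb lb cb).congr fun t => (hψ t).symm
  obtain ⟨t, hψt, ht⟩ := ((hψlim.eventually_ge_atTop α).and (eventually_le_atBot 0)).exists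
  obtain ⟨u, hu, hψu⟩ := intermediate_value_Icc' ht hψc.continuousOn ⟨hψ₀.le, hψt⟩
  have hφu := hfeas u hψu.ge (hψu ▸ hαβ)
  have hu₀ : u < 0 := hu.2.lt_of_ne (by rintro rfl; linarith)
  exact hφ₁.not_ge (quadratic_nonneg_of_dip hφ hu₀ hs₀ hs.2 hφu hφ₀ hφs)

theorem Matrix.eq_zero_of_forall_dotProduct_mulVec_self_eq_zero {ι : Type*} [Fintype ι]
    [DecidableEq ι] {M : Matrix ι ι ℝ} (hM : M.IsSymm) (h : ∀ x, x ⬝ᵥ M *ᵥ x = 0) : M = 0 := by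
  have hsymm : ∀ x y, y ⬝ᵥ M *ᵥ x = x ⬝ᵥ M *ᵥ y := fun x y => by
    rw [dotProduct_mulVec, ← mulVec_transpose, hM, dotProduct_comm]
  ext i j
  have := h (Pi.single i 1 + Pi.single j 1)
  simp only [mulVec_add, dotProduct_add, add_dotProduct, h, hsymm (Pi.single i 1)] at this
  simpa using this

theorem Matrix.add_smul_dotProduct_mulVec_add_smul {ι : Type*} [Fintype ι] (M : Matrix ι ι ℝ)
    (x v : ι → ℝ) (t : ℝ) :
    (x + t • v) ⬝ᵥ M *ᵥ (x + t • v) =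
      (v ⬝ᵥ M *ᵥ v) * t ^ 2 + (x ⬝ᵥ M *ᵥ v + v ⬝ᵥ M *ᵥ x) * t + x ⬝ᵥ M *ᵥ x := by
  simp only [mulVec_add, mulVec_smul, dotProduct_add, add_dotProduct, dotProduct_smul,
    smul_dotProduct, smul_eq_mul]
  ring

section qfun

variable {n : ℕ}

theorem qfun_add_smul (M : Matrix (Fin n) (Fin n) ℝ) (m : Fin n → ℝ) (r : ℝ) (x v : Fin n → ℝ)
    (t : ℝ) :
    qfun M m r (x + t • v) = (v ⬝ᵥ M *ᵥ v) * t ^ 2 +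
      (x ⬝ᵥ M *ᵥ v + v ⬝ᵥ M *ᵥ x + 2 * (m ⬝ᵥ v)) * t + qfun M m r x := by
  rw [qfun, qfun, add_smul_dotProduct_mulVec_add_smul, dotProduct_add, dotProduct_smul,
    smul_eq_mul]
  ring

theorem qfun_sub_const (M : Matrix (Fin n) (Fin n) ℝ) (m : Fin n → ℝ) (r e : ℝ)
    (x : Fin n → ℝ) :
    qfun M m (r - e) x = qfun M m r x - e := by
  simp only [qfun]; ring

theorem qfun_neg (M : Matrix (Fin n) (Fin n) ℝ) (m : Fin n → ℝ) (r : ℝ) (x : Fin n → ℝ) :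
    qfun (-M) (-m) (-r) x = -qfun M m r x := by
  simp only [qfun, neg_mulVec, dotProduct_neg, neg_dotProduct]; ring

theorem continuous_qfun (M : Matrix (Fin n) (Fin n) ℝ) (m : Fin n → ℝ) (r : ℝ) :
    Continuous (qfun M m r) := by
  unfold qfun; fun_prop

noncomputable def homogenization (M : Matrix (Fin n) (Fin n) ℝ) (m : Fin n → ℝ) (r : ℝ) :
    QuadraticForm ℝ ((Fin n → ℝ) × ℝ) :=
  M.toQuadraticForm'.comp (LinearMap.fst ℝ _ ℝ) +
    2 • QuadraticMap.linMulLin (LinearMap.snd ℝ _ ℝ)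
      (dotProductBilin ℝ ℝ m ∘ₗ LinearMap.fst ℝ _ ℝ) +
    r • QuadraticMap.sq.comp (LinearMap.snd ℝ _ ℝ)

theorem homogenization_apply (M : Matrix (Fin n) (Fin n) ℝ) (m : Fin n → ℝ) (r : ℝ)
    (x : Fin n → ℝ) (t : ℝ) :
    homogenization M m r (x, t) = x ⬝ᵥ M *ᵥ x + 2 * t * (m ⬝ᵥ x) + r * t ^ 2 := by
  simp [homogenization, Matrix.toQuadraticForm', Matrix.toLinearMap₂'_apply', dotProductBilin]
  ring

theorem homogenization_apply_of_ne_zero (M : Matrix (Fin n) (Fin n) ℝ) (m : Fin n → ℝ) (r : ℝ)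
    (x : Fin n → ℝ) {t : ℝ} (ht : t ≠ 0) :
    homogenization M m r (x, t) = t ^ 2 * qfun M m r (t⁻¹ • x) := by
  simp only [homogenization_apply, qfun, mulVec_smul, dotProduct_smul, smul_dotProduct,
    smul_eq_mul]
  field_simp

@[simp]
theorem homogenization_apply_one (M : Matrix (Fin n) (Fin n) ℝ) (m : Fin n → ℝ) (r : ℝ)
    (x : Fin n → ℝ) : homogenization M m r (x, 1) = qfun M m r x := by
  simpa using homogenization_apply_of_ne_zero M m r x one_ne_zero

variable {A B : Matrix (Fin n) (Fin n) ℝ} {a b : Fin n → ℝ} {c d α β : ℝ}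

theorem exists_nonneg_qfun_add_mul_qfun_nonneg (hslater : ∃ x, qfun B b d x < 0)
    (h : ∀ x, qfun B b d x < 0 → 0 ≤ qfun A a c x) :
    ∃ μ : ℝ, 0 ≤ μ ∧ ∀ x, 0 ≤ qfun A a c x + μ * qfun B b d x := by
  -- at `t = 0` the condition follows by continuity from nearby `t ≠ 0`
  have hhom : ∀ z, homogenization B b d z < 0 → 0 ≤ homogenization A a c z := by
    rintro ⟨x, t⟩ hz
    have hcont : ∀ M m r, Continuous fun s => homogenization M m r (x, s) := by
      intro M m r; simp only [homogenization_apply]; fun_prop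
    have := mem_closure_iff_nhdsWithin_neBot.1 (dense_compl_singleton (0 : ℝ) t)
    refine ge_of_tendsto
      ((hcont A a c).tendsto t |>.mono_left (nhdsWithin_le_nhds (s := {0}ᶜ))) ?_
    filter_upwards [self_mem_nhdsWithin, nhdsWithin_le_nhds
      ((hcont B b d).continuousAt.eventually_lt continuousAt_const hz)] with s hs hzs
    rw [homogenization_apply_of_ne_zero _ _ _ _ hs] at hzs ⊢
    exact mul_nonneg (sq_nonneg s) (h _ (neg_of_mul_neg_right hzs (sq_nonneg s)))
  obtain ⟨x, hx⟩ := hslater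
  obtain ⟨μ, hμ, hall⟩ :=
    QuadraticMap.exists_nonneg_add_mul_nonneg _ _ ⟨(x, 1), by rwa [homogenization_apply_one]⟩ hhom
  exact ⟨μ, hμ, fun x => by simpa only [homogenization_apply_one] using hall (x, 1)⟩

theorem dotProduct_mulVec_sub_nonpos_of_crossing (hαβ : α ≤ β)
    (hfeas : ∀ x, α ≤ qfun B b d x → qfun B b d x ≤ β → 0 ≤ qfun A a c x) {x y : Fin n → ℝ}
    (hfx : qfun A a c x < 0) (hhx : qfun B b d x < α)
    (hfy : qfun A a c y < 0) (hhy : β < qfun B b d y) :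
    (y - x) ⬝ᵥ B *ᵥ (y - x) ≤ 0 := by
  have hy : x + (1 : ℝ) • (y - x) = y := by simp
  exact leading_coeff_nonpos_of_crossing (φ := fun t => qfun A a c (x + t • (y - x)))
    (ψ := fun t => qfun B b d (x + t • (y - x))) (qfun_add_smul _ _ _ _ _)
    (qfun_add_smul _ _ _ _ _) hαβ (fun t => hfeas _) (by simpa using hfx) (by simpa using hhx)
    (by rwa [hy]) (by rwa [hy])

theorem dotProduct_mulVec_sub_eq_zero_of_crossing (hαβ : α ≤ β)
    (hfeas : ∀ x, α ≤ qfun B b d x → qfun B b d x ≤ β → 0 ≤ qfun A a c x) {x y : Fin n → ℝ}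
    (hfx : qfun A a c x < 0) (hhx : qfun B b d x < α)
    (hfy : qfun A a c y < 0) (hhy : β < qfun B b d y) :
    (y - x) ⬝ᵥ B *ᵥ (y - x) = 0 := by
  refine le_antisymm (dotProduct_mulVec_sub_nonpos_of_crossing hαβ hfeas hfx hhx hfy hhy) ?_
  -- the same configuration, seen from `y` with the constraint `-h ∈ [-β, -α]`
  have := dotProduct_mulVec_sub_nonpos_of_crossing (B := -B) (b := -b) (d := -d)
    (neg_le_neg hαβ) (fun z h₁ h₂ => hfeas z (by rw [qfun_neg] at h₂; linarith)
      (by rw [qfun_neg] at h₁; linarith)) hfy (by rw [qfun_neg]; linarith) hfx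
      (by rw [qfun_neg]; linarith)
  simp only [← neg_sub y x, neg_mulVec, mulVec_neg, neg_neg, neg_dotProduct] at this
  linarith

theorem eq_zero_of_crossing (hB : B.IsSymm) (hαβ : α ≤ β)
    (hfeas : ∀ x, α ≤ qfun B b d x → qfun B b d x ≤ β → 0 ≤ qfun A a c x) {x y : Fin n → ℝ}
    (hfx : qfun A a c x < 0) (hhx : qfun B b d x < α)
    (hfy : qfun A a c y < 0) (hhy : β < qfun B b d y) : B = 0 := by
  refine eq_zero_of_forall_dotProduct_mulVec_self_eq_zero hB fun w => ?_
  -- the form vanishes on a neighbourhood of `y - x`, hence along every line through it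
  have hnear : ∀ᶠ x' in 𝓝 x, qfun A a c x' < 0 ∧ qfun B b d x' < α :=
    ((continuous_qfun A a c).continuousAt.eventually_lt continuousAt_const hfx).and
      ((continuous_qfun B b d).continuousAt.eventually_lt continuousAt_const hhx)
  have hline : Tendsto (fun s : ℝ => x - s • w) (𝓝 0) (𝓝 x) := by
    have : Continuous fun s : ℝ => x - s • w := by fun_prop
    simpa using this.tendsto 0
  refine eq_zero_of_eventually_quadratic_eq_zero (b := (y - x) ⬝ᵥ B *ᵥ w + w ⬝ᵥ B *ᵥ (y - x))
    (c := (y - x) ⬝ᵥ B *ᵥ (y - x)) ?_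
  filter_upwards [hline.eventually hnear] with s ⟨hf, hh⟩
  have hv : y - (x - s • w) = y - x + s • w := by abel
  rw [← add_smul_dotProduct_mulVec_add_smul, ← hv]
  exact dotProduct_mulVec_sub_eq_zero_of_crossing hαβ hfeas hf hh hfy hhy

theorem exists_interval_multiplier (hB : B.IsSymm) (hBne : B ≠ 0) {xb : Fin n → ℝ}
    (hα : α < qfun B b d xb) (hβ : qfun B b d xb < β)
    (hfeas : ∀ x, α ≤ qfun B b d x → qfun B b d x ≤ β → 0 ≤ qfun A a c x) :
    ∃ μ : ℝ, ∀ x, 0 ≤ qfun A a c x + -min μ 0 * (qfun B b d x - β)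
      + max μ 0 * (α - qfun B b d x) := by
  by_cases hupper : ∀ x, qfun B b d x < β → 0 ≤ qfun A a c x
  · obtain ⟨μ, hμ, hall⟩ := exists_nonneg_qfun_add_mul_qfun_nonneg (d := d - β)
      ⟨xb, by rwa [qfun_sub_const, sub_neg]⟩
      fun x hx => hupper x (by rwa [qfun_sub_const, sub_neg] at hx)
    refine ⟨-μ, fun x => ?_⟩
    rw [min_eq_left (neg_nonpos.2 hμ), max_eq_right (neg_nonpos.2 hμ)]
    simpa [qfun_sub_const] using hall x
  by_cases hlower : ∀ x, α < qfun B b d x → 0 ≤ qfun A a c x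
  · obtain ⟨μ, hμ, hall⟩ :=
      exists_nonneg_qfun_add_mul_qfun_nonneg (B := -B) (b := -b) (d := -(d - α))
      ⟨xb, by rw [qfun_neg, qfun_sub_const]; linarith⟩
      fun x hx => hlower x (by rw [qfun_neg, qfun_sub_const] at hx; linarith)
    refine ⟨μ, fun x => ?_⟩
    rw [min_eq_right hμ, max_eq_left hμ]
    have := hall x
    rw [qfun_neg, qfun_sub_const] at this
    linarith
  push Not at hupper hlower
  obtain ⟨x, hxβ, hfx⟩ := hupper
  obtain ⟨y, hyα, hfy⟩ := hlower
  have hxα : qfun B b d x < α := by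
    by_contra! hxα
    exact hfx.not_ge (hfeas x hxα hxβ.le)
  have hyβ : β < qfun B b d y := by
    by_contra! hyβ
    exact hfy.not_ge (hfeas y hyα.le hyβ)
  exact absurd (eq_zero_of_crossing hB (hα.le.trans hβ.le) hfeas hfx hxα hfy hyβ) hBne

end qfun

theorem gtrs_strong_duality_general (n : ℕ)
    (A B : Matrix (Fin n) (Fin n) ℝ) (hB : B.IsSymm)
    (a b : Fin n → ℝ) (c d : ℝ) (α β : ℝ)
    (hBne : B ≠ 0)
    (hSlater : ∃ xbar : Fin n → ℝ, α < qfun B b d xbar ∧ qfun B b d xbar < β) :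
    (⨅ x ∈ {x : Fin n → ℝ | α ≤ qfun B b d x ∧ qfun B b d x ≤ β},
        ((qfun A a c x : ℝ) : EReal)) =
      ⨆ μ : ℝ, ⨅ x : Fin n → ℝ,
        ((qfun A a c x + (-(min μ 0)) * (qfun B b d x - β)
          + (max μ 0) * (α - qfun B b d x) : ℝ) : EReal) := by
  obtain ⟨xb, hα, hβ⟩ := hSlater
  refine le_antisymm (EReal.ge_of_forall_gt_iff_ge.1 fun p hp => ?_)
    (iSup_le fun μ => le_iInf₂ fun x hx => (iInf_le _ x).trans (EReal.coe_le_coe_iff.2 ?_))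
  · have hfeas : ∀ x, α ≤ qfun B b d x → qfun B b d x ≤ β → 0 ≤ qfun A a (c - p) x := by
      intro x h₁ h₂
      have := hp.le.trans (iInf₂_le x ⟨h₁, h₂⟩)
      rw [qfun_sub_const, sub_nonneg]
      exact_mod_cast this
    obtain ⟨μ, hμ⟩ := exists_interval_multiplier hB hBne hα hβ hfeas
    refine le_iSup_of_le μ (le_iInf fun x => EReal.coe_le_coe_iff.2 ?_)
    have := hμ x
    rw [qfun_sub_const] at this
    linarith
  · have h₁ : 0 ≤ -min μ 0 := neg_nonneg.2 (min_le_right μ 0)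
    have h₂ : 0 ≤ max μ 0 := le_max_right μ 0
    nlinarith [hx.1, hx.2]

/-- Strong Lagrangian duality for the interval bounded generalized trust region
subproblem, under `B ≠ 0` and the Slater condition. -/
theorem gtrs_strong_duality (n : ℕ) (hn : 0 < n)
    (A B : Matrix (Fin n) (Fin n) ℝ) (hA : A.IsSymm) (hB : B.IsSymm)
    (a b : Fin n → ℝ) (c d : ℝ) (α β : ℝ) (hαβ : α < β)
    (hBne : B ≠ 0)
    (hSlater : ∃ xbar : Fin n → ℝ, α < qfun B b d xbar ∧ qfun B b d xbar < β) :
    (⨅ x ∈ {x : Fin n → ℝ | α ≤ qfun B b d x ∧ qfun B b d x ≤ β},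
        ((qfun A a c x : ℝ) : EReal)) =
      ⨆ μ : ℝ, ⨅ x : Fin n → ℝ,
        ((qfun A a c x + (-(min μ 0)) * (qfun B b d x - β)
          + (max μ 0) * (α - qfun B b d x) : ℝ) : EReal) :=
  gtrs_strong_duality_general n A B hB a b c d α β hBne hSlater
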